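/- Let k,m,c ≥ 0, let (G,s_1,t_1,…,s_k,t_k) be a problem instance, and let (L_1,X_1,Y_1),…,(L_n,X_n,Y_n) be (k,m,c)-rails in it with (L_p,X_p,Y_p)→(L_{p+1},X_{p+1},Y_{p+1}) for 1 ≤ p ≤ n−1, where L_p=(M_{p,1},…,M_{p,k}). For 1 ≤ p ≤ n and 1 ≤ j ≤ k let P_{p,j} be the union of M_{1,j},…,M_{p,j}. Then P_{p,j} is a path from the first vertex of M_{1,j} to the last vertex of M_{p,j}. -/

import Mathlib

open List

/-! Basic digraph/path definitions.  A digraph on `V` is a relation `G : V → V → Prop`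
(looplessness is expressed by `Irreflexive G`).  A (directed) path is a nonempty list of
distinct vertices in which consecutive vertices are joined by edges of `G`. -/

/-- `uv` is an edge of the path `P`, i.e. `u,v` are consecutive on `P`. -/
def PEdge {V : Type} (P : List V) (u v : V) : Prop := [u, v] <:+: P

/-- `P` is a directed path of the digraph `G`. -/
def IsPath {V : Type} (G : V → V → Prop) (P : List V) : Prop :=
  P ≠ [] ∧ P.Nodup ∧ P.Chain' G

/-- `P` is a minimal path of `G`: for every edge `v_i v_j` of `G` between vertices of `P`,
`j ≤ i + 1`. -/
def IsMinimal {V : Type} (G : V → V → Prop) (P : List V) : Prop :=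
  ∀ i j : Fin P.length, G (P.get i) (P.get j) → (j : ℕ) ≤ (i : ℕ) + 1

/-- `G` is `d`-path-dominant. -/
def PathDominant {V : Type} (d : ℕ) (G : V → V → Prop) : Prop :=
  ∀ P : List V, IsPath G P → IsMinimal G P → P.length = d →
    ∀ v : V, v ∈ P ∨ (∃ w ∈ P, G v w) ∨ (∃ w ∈ P, G w v)

/-- A linkage: a tuple of pairwise vertex-disjoint paths. -/
def IsLinkage {V : Type} (G : V → V → Prop) {k : ℕ} (L : Fin k → List V) : Prop :=
  (∀ i, IsPath G (L i)) ∧ ∀ i j : Fin k, i ≠ j → ∀ v, v ∈ L i → v ∉ L j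

/-- `v` is `Q`-outward: `v ∉ Q` and no vertex of `Q` is adjacent from `v`. -/
def Outward {V : Type} (G : V → V → Prop) (Q : List V) (v : V) : Prop :=
  v ∉ Q ∧ ∀ w ∈ Q, ¬ G v w

/-- `v` is `Q`-inward: `v ∉ Q` and no vertex of `Q` is adjacent to `v`. -/
def Inward {V : Type} (G : V → V → Prop) (Q : List V) (v : V) : Prop :=
  v ∉ Q ∧ ∀ w ∈ Q, ¬ G w v

section Inhab
variable {V : Type} [Inhabited V]

/-- A linkage for the problem instance `(G, s₁, t₁, …, s_k, t_k)`. -/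
def IsLinkageFor (G : V → V → Prop) {k : ℕ} (s t : Fin k → V) (L : Fin k → List V) : Prop :=
  IsLinkage G L ∧ ∀ i, (L i).head! = s i ∧ (L i).getLast! = t i

/-- `x` is a quality: there is an `x`-linkage for the instance. -/
def IsQuality (G : V → V → Prop) {k : ℕ} (s t : Fin k → V) (x : Fin k → ℕ) : Prop :=
  ∃ L : Fin k → List V, IsLinkageFor G s t L ∧ ∀ i, (L i).length = x i

/-- `x` is a key quality: a quality not strictly dominating any other quality. -/
def IsKeyQuality (G : V → V → Prop) {k : ℕ} (s t : Fin k → V) (x : Fin k → ℕ) : Prop :=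
  IsQuality G s t x ∧ ¬ ∃ y : Fin k → ℕ, IsQuality G s t y ∧ y ≤ x ∧ y ≠ x

/-- `v` is an internal vertex of the linkage `M`. -/
def Internal {k : ℕ} (M : Fin k → List V) (v : V) : Prop :=
  (∃ i, v ∈ M i) ∧ ∀ i, v ≠ (M i).head! ∧ v ≠ (M i).getLast!

/-- The linkage `M` is internally disjoint from the linkage `L`. -/
def InternallyDisjointFrom {k l : ℕ} (M : Fin k → List V) (L : Fin l → List V) : Prop :=
  ∀ v, Internal M v → ∀ i, v ∉ L i

/-- A planar `(Q,R)`-matching of cardinality `n`. -/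
def IsPlanarMatching (G : V → V → Prop) (Q R : List V) {n : ℕ} (M : Fin n → List V) : Prop :=
  IsLinkage G M ∧ (∀ j, (M j).length = 2 ∨ (M j).length = 3) ∧
  (List.ofFn fun j => (M j).head!).Sublist Q ∧
  (List.ofFn fun j => (M j).getLast!).Sublist R

/-- A planar `(Q,R)`-matching is `s`-spaced. -/
def SSpaced (Q R : List V) {n : ℕ} (M : Fin n → List V) (s : ℕ) : Prop :=
  (∀ W : List V, W <:+: Q → W.length ≤ s →
    ∀ j j' : Fin n, (∃ v ∈ W, v ∈ M j) → (∃ v ∈ W, v ∈ M j') → j = j') ∧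
  (∀ W : List V, W <:+: R → W.length ≤ s →
    ∀ j j' : Fin n, (∃ v ∈ W, v ∈ M j) → (∃ v ∈ W, v ∈ M j') → j = j')

/-- `A(L)`: vertices outside `V(L)` that are `(M_j ∖ t(M_j))`-inward for some `j`
with `t(M_j) ≠ t_j`. -/
def RailA (G : V → V → Prop) {k : ℕ} (t : Fin k → V) (L : Fin k → List V) : Set V :=
  {v | (∀ i, v ∉ L i) ∧ ∃ j, (L j).getLast! ≠ t j ∧ ∀ w ∈ (L j).dropLast, ¬ G w v}

/-- `B(L)`: vertices outside `V(L)` that are `(M_j ∖ s(M_j))`-outward for some `j`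
with `s(M_j) ≠ s_j`. -/
def RailB (G : V → V → Prop) {k : ℕ} (s : Fin k → V) (L : Fin k → List V) : Set V :=
  {v | (∀ i, v ∉ L i) ∧ ∃ j, (L j).head! ≠ s j ∧ ∀ w ∈ (L j).tail, ¬ G v w}

/-- The confusion of the linkage `L`, namely `|A(L) ∩ B(L)|`. -/
noncomputable def Confusion (G : V → V → Prop) {k : ℕ} (s t : Fin k → V)
    (L : Fin k → List V) : ℕ :=
  (RailA G t L ∩ RailB G s L).ncard

/-- `(L, X, Y)` is a `(k,m,c)`-rail in the problem instance. -/
def IsRail (G : V → V → Prop) {k : ℕ} (s t : Fin k → V) (m c : ℕ)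
    (L : Fin k → List V) (X Y : Set V) : Prop :=
  IsLinkage G L ∧
  (∀ j, (L j).length ≤ 2*m ∧
    ((L j).length < 2*m → (L j).head! = s j ∨ (L j).getLast! = t j)) ∧
  Confusion G s t L ≤ c ∧
  Disjoint X Y ∧
  X ⊆ RailA G t L ∧ Y ⊆ RailB G s L ∧ X ∪ Y = RailA G t L ∪ RailB G s L

end Inhab

/-- The data of a potential rail: a `k`-tuple of paths together with two vertex sets. -/
abbrev RailT (V : Type) (k : ℕ) := (Fin k → List V) × Set V × Set V

section Inhab2
variable {V : Type} [Inhabited V]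

/-- The edge relation `(L,X,Y) → (L',X',Y')` between distinct rails. -/
def RailStep (G : V → V → Prop) {k : ℕ} (r r' : RailT V k) : Prop :=
  r ≠ r' ∧
  (∀ i, ∃ W : List V, IsPath G W ∧ W.head! = (r.1 i).head! ∧
    W.getLast! = (r'.1 i).getLast! ∧
    (∀ v, v ∈ W ↔ v ∈ r.1 i ∨ v ∈ r'.1 i) ∧
    (∀ u v, PEdge W u v ↔ PEdge (r.1 i) u v ∨ PEdge (r'.1 i) u v)) ∧
  (∀ i, ∀ v ∈ r'.1 i, v ∈ r.1 i ∨ v ∈ r.2.1) ∧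
  (∀ i, ∀ v ∈ r.1 i, v ∈ r'.1 i ∨ v ∈ r'.2.2) ∧
  r'.2.1 ⊆ r.2.1 ∧ r.2.2 ⊆ r'.2.2

/-- A path from `s₀` to `t₀` in the `(k,m,c)`-tracker, recorded by its list of
intermediate rail vertices. -/
def IsTrackerPath (G : V → V → Prop) {k : ℕ} (s t : Fin k → V) (m c : ℕ)
    (rs : List (RailT V k)) : Prop :=
  rs ≠ [] ∧ rs.Nodup ∧ rs.Chain' (RailStep G) ∧
  (∀ r ∈ rs, IsRail G s t m c r.1 r.2.1 r.2.2) ∧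
  (∀ r ∈ rs.head?, ∀ j, (r.1 j).head! = s j) ∧
  (∀ r ∈ rs.getLast?, ∀ j, (r.1 j).getLast! = t j)

end Inhab2

/-- A tracker path traces the linkage `P`: each `P j` is the union (as a digraph) of the
`j`-th members of the rails of the path. -/
def Traces {V : Type} {k : ℕ} (rs : List (RailT V k)) (P : Fin k → List V) : Prop :=
  ∀ j, (∀ v, v ∈ P j ↔ ∃ r ∈ rs, v ∈ r.1 j) ∧
       (∀ u v, PEdge (P j) u v ↔ ∃ r ∈ rs, PEdge (r.1 j) u v)

section Dec
variable {V : Type} [DecidableEq V]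

/-- `V(L)`, the set of vertices of the linkage `L`, as a finset. -/
def LV {k : ℕ} (L : Fin k → List V) : Finset V :=
  Finset.univ.biUnion fun i => (L i).toFinset

/-- `B` is acceptable for the linkage `L` (with parameters `d, k`). -/
def Acceptable [Inhabited V] (G : V → V → Prop) (d k : ℕ) (L : Fin k → List V)
    (B : Finset V) : Prop :=
  (∀ j : Fin k, ∀ u v : V, PEdge (L j) u v → v ∈ B → u ∈ B) ∧
  ∀ i j : Fin k, ¬ ∃ M : Fin ((k-1)*d + k^2 + 2) → List V,
    IsPlanarMatching G ((L i).filter (· ∈ B)) ((L j).filter (· ∉ B)) M ∧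
    InternallyDisjointFrom M L

/-- Labels along a tracker path, after the first rail: consecutive rails `r, r'`
contribute `|V(M'_j) ∖ V(M_j)|` in coordinate `j`. -/
def labelFrom {k : ℕ} : RailT V k → List (RailT V k) → (Fin k → ℕ)
  | _, [] => fun _ => 0
  | r, r' :: rest => (fun j => ((r'.1 j).toFinset \ (r.1 j).toFinset).card) + labelFrom r' rest

/-- The total label `l(P)` of a tracker path with rail list `rs`: the edge from `s₀`
contributes `|V(M_j)|`, each rail-to-rail edge contributes the difference counts, and the
edge to `t₀` contributes `0`. -/
def pathLabel {k : ℕ} : List (RailT V k) → (Fin k → ℕ)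
  | [] => fun _ => 0
  | r :: rest => (fun j => (r.1 j).toFinset.card) + labelFrom r rest

/-- `Q_{p,j}`: the maximal subpath of `P` with at most `m` vertices whose last vertex is
the last vertex of `P` among `v_1, …, v_p` (null if there is none). -/
def Qseg (m : ℕ) (e : List V) (p : ℕ) (P : List V) : List V :=
  (P.filter (· ∈ e.take p)).drop ((P.filter (· ∈ e.take p)).length - m)

/-- `R_{p,j}`: the maximal subpath of `P` with at most `m` vertices whose first vertex is
the first vertex of `P` among `v_{p+1}, …, v_n` (null if there is none). -/
def Rseg (m : ℕ) (e : List V) (p : ℕ) (P : List V) : List V :=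
  (P.filter (· ∈ e.drop p)).take m

/-- `M_{p,j} = Q_{p,j} ∪ R_{p,j}` (together with the connecting edge of `P` when both
are non-null). -/
def Mseg (m : ℕ) (e : List V) (p : ℕ) (P : List V) : List V :=
  Qseg m e p P ++ Rseg m e p P

end Dec

/-! Induction on `p`, extending a path `W` realizing `M_0 ∪ … ∪ M_p` (fixed `j`).  Every edge
of the path `M_p` lies on the path realizing `M_p ∪ M_{p+1}`, which starts where `M_p` starts,
so that path is `M_p ++ β`; then `W ++ β` realizes `M_0 ∪ … ∪ M_{p+1}`.  It is a path because
each vertex of `β` is new in `M_{p+1}`, hence lies in `X_p ⊆ X_q ⊆ A(L_q)` and misses every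
earlier `M_q`. -/

section PathUnion

variable {V : Type}

theorem pEdge_append_iff {l₁ l₂ : List V} {u v : V} :
    PEdge (l₁ ++ l₂) u v ↔
      PEdge l₁ u v ∨ PEdge l₂ u v ∨ (u ∈ l₁.getLast? ∧ v ∈ l₂.head?) := by
  unfold PEdge
  induction l₁ with
  | nil => simp
  | cons a l₁ ih =>
    rw [List.cons_append, List.infix_cons_iff, ih, List.infix_cons_iff]
    cases l₁ <;> cases l₂ <;> simp [List.getLast?_cons_cons] <;> tauto

theorem pEdge_cons_iff {a : V} {l : List V} {u v : V} :
    PEdge (a :: l) u v ↔ (u = a ∧ v ∈ l.head?) ∨ PEdge l u v := by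
  have hsingle : ¬ PEdge [a] u v := fun h => by simpa using h.length_le
  simpa [hsingle, or_comm, eq_comm] using
    pEdge_append_iff (l₁ := [a]) (l₂ := l) (u := u) (v := v)

theorem prefix_of_forall_pEdge_imp {P W : List V} (hP : P.Nodup) (hW : W.Nodup)
    (hhead : P.head? = W.head?) (hedge : ∀ u v, PEdge P u v → PEdge W u v) : P <+: W := by
  induction P generalizing W with
  | nil => exact List.nil_prefix
  | cons a P ih =>
    obtain ⟨w, rfl⟩ : ∃ w, W = a :: w := ⟨W.tail, (List.cons_head?_tail hhead.symm).symm⟩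
    cases P with
    | nil => exact ⟨w, rfl⟩
    | cons b P =>
      have haw : a ∉ w := (List.nodup_cons.mp hW).1
      have hab := pEdge_cons_iff.mp (hedge a b (pEdge_cons_iff.mpr (Or.inl ⟨rfl, rfl⟩)))
      obtain ⟨w, rfl⟩ : ∃ w', w = b :: w' := by
        rcases hab with ⟨-, hb⟩ | hab
        · exact ⟨w.tail, (List.cons_head?_tail hb).symm⟩
        · exact absurd (hab.subset (by simp)) haw
      refine List.cons_prefix_cons.mpr
        ⟨rfl, ih (List.nodup_cons.mp hP).2 (List.nodup_cons.mp hW).2 rfl fun u v huv => ?_⟩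
      rcases pEdge_cons_iff.mp (hedge u v (pEdge_cons_iff.mpr (Or.inr huv))) with ⟨rfl, -⟩ | h
      · exact absurd (huv.subset (by simp)) (List.nodup_cons.mp hP).1
      · exact h

theorem isChain_append_of_getLast?_eq {R : V → V → Prop} {W P β : List V}
    (hW : W.IsChain R) (hPβ : (P ++ β).IsChain R) (hlast : W.getLast? = P.getLast?) :
    (W ++ β).IsChain R := by
  rw [List.isChain_append] at hPβ ⊢
  exact ⟨hW, hPβ.2.1, hlast ▸ hPβ.2.2⟩

theorem pEdge_append_iff_of_getLast?_eq {W P β : List V} (hlast : W.getLast? = P.getLast?)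
    (hPW : ∀ u v, PEdge P u v → PEdge W u v) {u v : V} :
    PEdge (W ++ β) u v ↔ PEdge W u v ∨ PEdge (P ++ β) u v := by
  rw [pEdge_append_iff, pEdge_append_iff, hlast]
  have := hPW u v
  tauto

variable [Inhabited V]

theorem head?_eq_of_head!_eq {l l' : List V} (hl : l ≠ []) (hl' : l' ≠ [])
    (h : l.head! = l'.head!) : l.head? = l'.head? := by
  cases l <;> cases l' <;> simp_all

theorem getLast?_eq_of_getLast!_eq {l l' : List V} (hl : l ≠ []) (hl' : l' ≠ [])
    (h : l.getLast! = l'.getLast!) : l.getLast? = l'.getLast? := by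
  simp_all [List.getLast?_eq_some_getLast]

def IsPathUnion (G : V → V → Prop) (W P Q : List V) : Prop :=
  IsPath G W ∧ W.head! = P.head! ∧ W.getLast! = Q.getLast! ∧
    (∀ v, v ∈ W ↔ v ∈ P ∨ v ∈ Q) ∧ (∀ u v, PEdge W u v ↔ PEdge P u v ∨ PEdge Q u v)

theorem IsPathUnion.exists_isPathUnion_of_fresh {G : V → V → Prop} {Wp P Q W : List V}
    (hWp : IsPathUnion G Wp P Q) (hP : IsPath G P) (hW : IsPath G W)
    (hlast : W.getLast! = P.getLast!) (hPW : ∀ v ∈ P, v ∈ W)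
    (hPWe : ∀ u v, PEdge P u v → PEdge W u v) (hfresh : ∀ v ∈ Q, v ∉ P → v ∉ W) :
    ∃ W', IsPathUnion G W' W Q := by
  obtain ⟨⟨hWpne, hWpnd, hWpch⟩, hWphead, hWplast, hWpmem, hWpedge⟩ := hWp
  obtain ⟨hPne, hPnd, -⟩ := hP
  obtain ⟨hWne, hWnd, hWch⟩ := hW
  have hlast? := getLast?_eq_of_getLast!_eq hWne hPne hlast
  obtain ⟨β, rfl⟩ : P <+: Wp := prefix_of_forall_pEdge_imp hPnd hWpnd
    (head?_eq_of_head!_eq hPne hWpne hWphead.symm) fun u v h => (hWpedge u v).2 (Or.inl h)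
  have hβ : ∀ v ∈ β, v ∈ Q ∧ v ∉ P := fun v hv =>
    have hvP : v ∉ P := fun h => (List.nodup_append.mp hWpnd).2.2 v h v hv rfl
    ⟨((hWpmem v).mp (List.mem_append_right P hv)).resolve_left hvP, hvP⟩
  refine ⟨W ++ β, ⟨by simp [hWne], ?_, isChain_append_of_getLast?_eq hWch hWpch hlast?⟩,
    List.head!_append β hWne, ?_, fun v => ?_, fun u v => ?_⟩
  · refine List.nodup_append.mpr ⟨hWnd, (List.nodup_append.mp hWpnd).2.1, ?_⟩
    rintro v hvW _ hv rfl
    exact hfresh v (hβ v hv).1 (hβ v hv).2 hvW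
  · rw [← hWplast, List.getLast!_eq_getLast?_getD, List.getLast!_eq_getLast?_getD,
      List.getLast?_append, List.getLast?_append, hlast?]
  · have := hWpmem v
    simp only [List.mem_append] at this ⊢
    have := hPW v
    have := hβ v
    tauto
  · rw [pEdge_append_iff_of_getLast?_eq hlast? hPWe, hWpedge]
    have := hPWe u v
    tauto

theorem exists_path_union_of_isPathUnion_succ {G : V → V → Prop} {P : ℕ → List V} {n : ℕ}
    (hP : ∀ q < n, IsPath G (P q))
    (hstep : ∀ q, q + 1 < n → ∃ W, IsPathUnion G W (P q) (P (q + 1)))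
    (hfresh : ∀ q, q + 1 < n → ∀ v ∈ P (q + 1), v ∉ P q → ∀ r ≤ q, v ∉ P r) :
    ∀ p < n, ∃ W, IsPath G W ∧ W.head! = (P 0).head! ∧ W.getLast! = (P p).getLast! ∧
      (∀ v, v ∈ W ↔ ∃ q ≤ p, v ∈ P q) ∧ (∀ u v, PEdge W u v ↔ ∃ q ≤ p, PEdge (P q) u v) := by
  have exists_le_succ (p : ℕ) (R : ℕ → Prop) :
      (∃ q ≤ p + 1, R q) ↔ (∃ q ≤ p, R q) ∨ R (p + 1) := by
    simp only [Nat.le_succ_iff, or_and_right, exists_or, exists_eq_left]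
  intro p hp
  induction p with
  | zero => exact ⟨P 0, hP 0 hp, rfl, rfl, by simp, by simp⟩
  | succ p ih =>
    obtain ⟨W, hW, hhead, hlast, hmem, hedge⟩ := ih (by omega)
    obtain ⟨Wp, hWp⟩ := hstep p hp
    obtain ⟨W', hW', hhead', hlast', hmem', hedge'⟩ := hWp.exists_isPathUnion_of_fresh
      (hP p (by omega)) hW hlast (fun v h => (hmem v).2 ⟨p, le_rfl, h⟩)
      (fun u v h => (hedge u v).2 ⟨p, le_rfl, h⟩) fun v hv hvp hvW => by
        obtain ⟨q, hq, h⟩ := (hmem v).1 hvW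
        exact hfresh p hp v hv hvp q hq h
    refine ⟨W', hW', hhead'.trans hhead, hlast', fun v => ?_, fun u v => ?_⟩
    · rw [hmem', hmem, exists_le_succ]
    · rw [hedge', hedge, exists_le_succ]

end PathUnion

theorem stmt12_general {V : Type} [Inhabited V]
    (G : V → V → Prop)
    (k m c : ℕ) (s t : Fin k → V) (n : ℕ)
    (M : ℕ → Fin k → List V) (X Y : ℕ → Set V)
    (hrail : ∀ p < n, IsRail G s t m c (M p) (X p) (Y p))
    (hstep : ∀ p, p + 1 < n → RailStep G (M p, X p, Y p) (M (p+1), X (p+1), Y (p+1))) :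
    ∀ p < n, ∀ j : Fin k, ∃ W : List V, IsPath G W ∧
      W.head! = (M 0 j).head! ∧ W.getLast! = (M p j).getLast! ∧
      (∀ v, v ∈ W ↔ ∃ q ≤ p, v ∈ M q j) ∧
      (∀ u v, PEdge W u v ↔ ∃ q ≤ p, PEdge (M q j) u v) := by
  have hX_anti {q r : ℕ} (hrq : r ≤ q) (hq : q < n) : X q ⊆ X r := by
    induction hrq with
    | refl => rfl
    | step _ ih => exact (hstep _ hq).2.2.2.2.1.trans (ih (by omega))
  intro p hp j
  refine exists_path_union_of_isPathUnion_succ (fun q hq => (hrail q hq).1.1 j)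
    (fun q hq => (hstep q hq).2.1 j) (fun q hq v hv hvq r hrq hvr => ?_) p hp
  rcases (hstep q hq).2.2.1 j v hv with h | h
  · exact hvq h
  · exact ((hrail r (by omega)).2.2.2.2.1 (hX_anti hrq (by omega) h)).1 j hvr

theorem stmt12 {V : Type} [Fintype V] [DecidableEq V] [Inhabited V]
    (G : V → V → Prop) (hG : Irreflexive G)
    (k m c : ℕ) (s t : Fin k → V) (n : ℕ)
    (M : ℕ → Fin k → List V) (X Y : ℕ → Set V)
    (hrail : ∀ p < n, IsRail G s t m c (M p) (X p) (Y p))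
    (hstep : ∀ p, p + 1 < n → RailStep G (M p, X p, Y p) (M (p+1), X (p+1), Y (p+1))) :
    ∀ p < n, ∀ j : Fin k, ∃ W : List V, IsPath G W ∧
      W.head! = (M 0 j).head! ∧ W.getLast! = (M p j).getLast! ∧
      (∀ v, v ∈ W ↔ ∃ q ≤ p, v ∈ M q j) ∧
      (∀ u v, PEdge W u v ↔ ∃ q ≤ p, PEdge (M q j) u v) :=
  stmt12_general G k m c s t n M X Y hrail hstep
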